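/- arXiv:2512.00455 — 2 statements merged into one kernel-verified Lean document; each statement's English description precedes it below -/
import Mathlib

section
/- Let b ∈ (0, +∞] and let (H, φ) solve the EdGB FLRW system on [0, b) with the negative-branch initial data with parameter β. Then H(t)^2·exp(φ(t)) < β^2 for all t ∈ (0, b). -/
/-- The EdGB FLRW system on a set `I ⊆ ℝ`: `H` is continuously differentiable and
`φ` twice continuously differentiable on `I`, and for every `t ∈ I` the Hamiltonian
constraint `3H² − 3e^φ φ' H³ = φ'²/2` and the scalar field equation
`φ'' = −3Hφ' − 3e^φ H²(H² + H')` hold. -/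
def EdGB (H φ : ℝ → ℝ) (I : Set ℝ) : Prop :=
  ContDiffOn ℝ 1 H I ∧ ContDiffOn ℝ 2 φ I ∧
  (∀ t ∈ I, 3 * H t ^ 2 - 3 * Real.exp (φ t) * deriv φ t * H t ^ 3 = (deriv φ t) ^ 2 / 2) ∧
  (∀ t ∈ I, deriv (deriv φ) t =
      -3 * H t * deriv φ t - 3 * Real.exp (φ t) * H t ^ 2 * (H t ^ 2 + deriv H t))

/-- The negative-branch initial data with parameter `β`:
`H(0) = β`, `φ(0) = 0`, `φ'(0) = −3β³ − √(9β⁶ + 6β²)`, with `0 < β < √6/6`. -/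
def NegBranchData (H φ : ℝ → ℝ) (β : ℝ) : Prop :=
  0 < β ∧ β < Real.sqrt 6 / 6 ∧ H 0 = β ∧ φ 0 = 0 ∧
  deriv φ 0 = -3 * β ^ 3 - Real.sqrt (9 * β ^ 6 + 6 * β ^ 2)

/-!
Differentiating the Hamiltonian constraint and eliminating `φ''` with the scalar field equation
gives a linear equation for `H'`. Wherever `H > 0` and `φ' < 0` it yields both
`(H² e^φ)' < 0` and `H' ≥ -3H²`. The constraint forbids `φ' = 0` while `H ≠ 0`, so starting
from `φ'(0) < 0` the sign of `φ'` persists as long as `H` stays positive; and `H' ≥ -3H²` means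
`1/H - 3t` is nonincreasing, i.e. `H(t) ≥ 1/(1/β + 3t)`, so `H` never reaches `0`.
Hence `H² e^φ` decreases strictly from its initial value `β²`.
-/

open Set Filter Real Topology

theorem exists_mem_Ioo_deriv_neg {f : ℝ → ℝ} {a b : ℝ} (hab : a < b)
    (hf : ContinuousOn f (Icc a b)) (hdiff : DifferentiableOn ℝ f (Ioo a b))
    (ha : deriv f a < 0) : ∃ c ∈ Ioo a b, deriv f c < 0 := by
  have hslope : Tendsto (slope f a) (𝓝[>] a) (𝓝 (deriv f a)) :=
    (hasDerivAt_iff_tendsto_slope.mp (differentiableAt_of_deriv_ne_zero ha.ne).hasDerivAt).mono_left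
      (nhdsWithin_mono _ fun _ hy => ne_of_gt hy)
  obtain ⟨y, hy_slope, hy⟩ :=
    ((hslope.eventually_lt_const ha).and (Ioo_mem_nhdsGT hab)).exists
  obtain ⟨c, hc, hc_eq⟩ := exists_deriv_eq_slope f hy.1
    (hf.mono (Icc_subset_Icc_right hy.2.le)) (hdiff.mono (Ioo_subset_Ioo_right hy.2.le))
  exact ⟨c, ⟨hc.1, hc.2.trans hy.2⟩, by rwa [hc_eq, ← slope_def_field]⟩

theorem inv_le_inv_add_mul_of_neg_mul_sq_le_deriv {f : ℝ → ℝ} {a b c : ℝ} (hab : a ≤ b)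
    (hf : ContinuousOn f (Icc a b)) (hpos : ∀ x ∈ Icc a b, 0 < f x)
    (hdiff : ∀ x ∈ Ioo a b, DifferentiableAt ℝ f x)
    (hderiv : ∀ x ∈ Ioo a b, -(c * f x ^ 2) ≤ deriv f x) :
    (f b)⁻¹ ≤ (f a)⁻¹ + c * (b - a) := by
  have hg : ∀ x ∈ Ioo a b,
      HasDerivAt (fun x => (f x)⁻¹ - c * x) (-deriv f x / f x ^ 2 - c) x := fun x hx =>
    (((hdiff x hx).hasDerivAt.inv (hpos x (Ioo_subset_Icc_self hx)).ne').sub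
      ((hasDerivAt_id x).const_mul c)).congr_deriv (by ring)
  have hanti : AntitoneOn (fun x => (f x)⁻¹ - c * x) (Icc a b) :=
    antitoneOn_of_deriv_nonpos (convex_Icc a b)
      ((hf.inv₀ fun x hx => (hpos x hx).ne').sub (continuousOn_const.mul continuousOn_id))
      (by rw [interior_Icc]; exact fun x hx => (hg x hx).differentiableAt.differentiableWithinAt)
      (by
        rw [interior_Icc]
        intro x hx
        have hfx := hpos x (Ioo_subset_Icc_self hx)
        rw [(hg x hx).deriv, sub_nonpos, div_le_iff₀ (by positivity)]
        linarith [hderiv x hx])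
  linarith [hanti ⟨le_rfl, hab⟩ ⟨hab, le_rfl⟩ hab]

theorem ContinuousOn.forall_pos_of_uniform_lower_bound {f : ℝ → ℝ} {a b c : ℝ}
    (hf : ContinuousOn f (Icc a b)) (ha : 0 < f a) (hc : 0 < c)
    (hbound : ∀ x ∈ Icc a b, (∀ y ∈ Icc a x, 0 < f y) → c ≤ f x) :
    ∀ x ∈ Icc a b, 0 < f x := by
  by_contra! hneg
  set Z := Icc a b ∩ f ⁻¹' Iic 0
  have hZ_ne : Z.Nonempty := let ⟨x, hx, hfx⟩ := hneg; ⟨x, hx, hfx⟩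
  have hZ_bdd : BddBelow Z := ⟨a, fun z hz => hz.1.1⟩
  have hs : sInf Z ∈ Z := (hf.preimage_isClosed_of_isClosed isClosed_Icc isClosed_Iic).csInf_mem
    hZ_ne hZ_bdd
  have hfs : f (sInf Z) ≤ 0 := hs.2
  have has : a < sInf Z := hs.1.1.lt_of_ne fun h => by rw [← h] at hfs; linarith
  have hpos_before : ∀ y ∈ Ico a (sInf Z), 0 < f y := fun y hy => by
    by_contra! hfy
    linarith [hy.2, csInf_le hZ_bdd ⟨⟨hy.1, hy.2.le.trans hs.1.2⟩, hfy⟩]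
  have hle : c ≤ f (sInf Z) :=
    ContinuousWithinAt.closure_le (s := Ico a (sInf Z))
      (by rw [closure_Ico has.ne]; exact ⟨has.le, le_rfl⟩)
      continuousWithinAt_const
      ((hf _ hs.1).mono fun y hy => ⟨hy.1, hy.2.le.trans hs.1.2⟩)
      fun y hy => hbound y ⟨hy.1, hy.2.le.trans hs.1.2⟩ fun z hz =>
        hpos_before z ⟨hz.1, hz.2.trans_lt hy.2⟩
  linarith

namespace EdGB

variable {H φ : ℝ → ℝ} {I J : Set ℝ} {a s x T : ℝ}

theorem mono (h : EdGB H φ I) (hJ : J ⊆ I) : EdGB H φ J :=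
  ⟨h.1.mono hJ, h.2.1.mono hJ, fun t ht => h.2.2.1 t (hJ ht), fun t ht => h.2.2.2 t (hJ ht)⟩

theorem differentiableAt_hubble (h : EdGB H φ I) (hs : s ∈ interior I) :
    DifferentiableAt ℝ H s :=
  (h.1.contDiffAt (mem_interior_iff_mem_nhds.1 hs)).differentiableAt one_ne_zero

theorem differentiableAt_field (h : EdGB H φ I) (hs : s ∈ interior I) :
    DifferentiableAt ℝ φ s :=
  (h.2.1.contDiffAt (mem_interior_iff_mem_nhds.1 hs)).differentiableAt two_ne_zero

theorem contDiffOn_deriv_field (h : EdGB H φ I) : ContDiffOn ℝ 1 (deriv φ) (interior I) :=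
  (h.2.1.mono interior_subset).deriv_of_isOpen isOpen_interior (by norm_num)

theorem differentiableAt_deriv_field (h : EdGB H φ I) (hs : s ∈ interior I) :
    DifferentiableAt ℝ (deriv φ) s :=
  (h.contDiffOn_deriv_field.contDiffAt (isOpen_interior.mem_nhds hs)).differentiableAt
    one_ne_zero

theorem hubble_eq_zero_of_deriv_field_eq_zero (h : EdGB H φ I) (hs : s ∈ I)
    (h0 : deriv φ s = 0) : H s = 0 := by
  have hc := h.2.2.1 s hs
  rw [h0] at hc
  exact pow_eq_zero_iff two_ne_zero |>.mp (by nlinarith)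

theorem deriv_constraint (h : EdGB H φ I) (hs : s ∈ interior I) :
    6 * H s * deriv H s - 3 * exp (φ s) * ((deriv φ s ^ 2 + deriv (deriv φ) s) * H s ^ 3
      + 3 * deriv φ s * H s ^ 2 * deriv H s) = deriv φ s * deriv (deriv φ) s := by
  have hH := (h.differentiableAt_hubble hs).hasDerivAt
  have hφ := (h.differentiableAt_field hs).hasDerivAt
  have hφ' := (h.differentiableAt_deriv_field hs).hasDerivAt
  have hlhs : HasDerivAt (fun t => 3 * H t ^ 2 - 3 * exp (φ t) * deriv φ t * H t ^ 3) _ s :=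
    ((hH.pow 2).const_mul 3).sub (((hφ.exp.const_mul 3).mul hφ').mul (hH.pow 3))
  have hrhs : HasDerivAt (fun t => deriv φ t ^ 2 / 2) _ s := (hφ'.pow 2).div_const 2
  have heq : deriv (fun t => 3 * H t ^ 2 - 3 * exp (φ t) * deriv φ t * H t ^ 3) s
      = deriv (fun t => deriv φ t ^ 2 / 2) s :=
    Filter.EventuallyEq.deriv_eq <| eventually_of_mem (mem_interior_iff_mem_nhds.1 hs) h.2.2.1
  rw [hlhs.deriv, hrhs.deriv, Pi.mul_apply] at heq
  linear_combination heq

theorem deriv_hubble_mul_eq (h : EdGB H φ I) (hs : s ∈ interior I) :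
    deriv H s * (2 * H s + 3 * exp (φ s) ^ 2 * H s ^ 5 - 2 * exp (φ s) * H s ^ 2 * deriv φ s)
      = -H s * deriv φ s ^ 2 - 4 * exp (φ s) * H s ^ 4 * deriv φ s
        + exp (φ s) * H s ^ 3 * deriv φ s ^ 2 - 3 * exp (φ s) ^ 2 * H s ^ 7 := by
  linear_combination (1 / 3) * h.deriv_constraint hs
    + ((3 * exp (φ s) * H s ^ 3 + deriv φ s) / 3) * h.2.2.2 s (interior_subset hs)

theorem deriv_energy_neg (h : EdGB H φ I) (hs : s ∈ interior I) (hH : 0 < H s)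
    (hφ : deriv φ s < 0) : deriv (fun t => H t ^ 2 * exp (φ t)) s < 0 := by
  have hF : HasDerivAt (fun t => H t ^ 2 * exp (φ t)) _ s :=
    ((h.differentiableAt_hubble hs).hasDerivAt.pow 2).mul
      (h.differentiableAt_field hs).hasDerivAt.exp
  have hlin := h.deriv_hubble_mul_eq hs
  have hcon := h.2.2.1 s (interior_subset hs)
  have hE := exp_pos (φ s)
  set E := exp (φ s)
  set η := H s
  set η' := deriv H s
  set p := deriv φ s
  have hD : 0 < 2 + 3 * E ^ 2 * η ^ 4 - 2 * E * η * p := by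
    nlinarith [mul_pos (mul_pos hE hH) (neg_pos.mpr hφ), pow_pos (mul_pos hE (pow_pos hH 2)) 2]
  have hkey : (2 * η * η' + η ^ 2 * p) * ((2 + 3 * E ^ 2 * η ^ 4 - 2 * E * η * p) * η)
      = η ^ 3 * (2 * p - 12 * η + 4 * E * η ^ 2 * p + 3 * E ^ 2 * η ^ 4 * p
          - 6 * E ^ 2 * η ^ 5) := by
    linear_combination 2 * η * hlin + 4 * η ^ 2 * hcon
  have hrhs :
      η ^ 3 * (2 * p - 12 * η + 4 * E * η ^ 2 * p + 3 * E ^ 2 * η ^ 4 * p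
        - 6 * E ^ 2 * η ^ 5) < 0 := by
    refine mul_neg_of_pos_of_neg (by positivity) ?_
    nlinarith [mul_neg_of_pos_of_neg (by positivity : 0 < E * η ^ 2) hφ,
      mul_neg_of_pos_of_neg (by positivity : 0 < E ^ 2 * η ^ 4) hφ,
      (by positivity : 0 < E ^ 2 * η ^ 5)]
  have hX := neg_of_mul_neg_left (hkey ▸ hrhs) (mul_pos hD hH).le
  calc deriv (fun t => H t ^ 2 * exp (φ t)) s = (2 * η * η' + η ^ 2 * p) * E := by
        rw [hF.deriv, Pi.pow_apply]; push_cast; ring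
    _ < 0 := mul_neg_of_neg_of_pos hX hE

theorem neg_three_mul_sq_le_deriv_hubble (h : EdGB H φ I) (hs : s ∈ interior I) (hH : 0 < H s)
    (hφ : deriv φ s < 0) : -(3 * H s ^ 2) ≤ deriv H s := by
  have hlin := h.deriv_hubble_mul_eq hs
  have hcon := h.2.2.1 s (interior_subset hs)
  have hE := exp_pos (φ s)
  set E := exp (φ s)
  set η := H s
  set η' := deriv H s
  set p := deriv φ s
  have hD : 0 < 2 + 3 * E ^ 2 * η ^ 4 - 2 * E * η * p := by
    nlinarith [mul_pos (mul_pos hE hH) (neg_pos.mpr hφ), pow_pos (mul_pos hE (pow_pos hH 2)) 2]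
  have hkey : (η' + 3 * η ^ 2) * ((2 + 3 * E ^ 2 * η ^ 4 - 2 * E * η * p) * η)
      = 2 * E * η ^ 4 * (3 * η - 2 * p + 3 * E * η ^ 3 - 3 * E * η ^ 2 * p) := by
    linear_combination hlin + (2 * η - 2 * E * η ^ 3) * hcon
  have hrhs : 0 < 2 * E * η ^ 4 * (3 * η - 2 * p + 3 * E * η ^ 3 - 3 * E * η ^ 2 * p) := by
    refine mul_pos (by positivity) ?_
    nlinarith [mul_neg_of_pos_of_neg (by positivity : 0 < E * η ^ 2) hφ,
      (by positivity : 0 < E * η ^ 3)]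
  linarith [pos_of_mul_pos_left (hkey ▸ hrhs) (mul_pos hD hH).le]

theorem deriv_field_neg (h : EdGB H φ (Icc a T)) (hφa : deriv φ a < 0) (hx : x ∈ Ioo a T)
    (hH : ∀ y ∈ Ioc a x, 0 < H y) : deriv φ x < 0 := by
  have hint : Ioo a T ⊆ interior (Icc a T) := interior_Icc.symm.subset
  obtain ⟨ξ, hξ, hξ_neg⟩ := exists_mem_Ioo_deriv_neg hx.1
    (h.2.1.continuousOn.mono (Icc_subset_Icc_right hx.2.le))
    (fun y hy => (h.differentiableAt_field
      (hint ⟨hy.1, hy.2.trans hx.2⟩)).differentiableWithinAt) hφa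
  have hsub : Icc ξ x ⊆ interior (Icc a T) := (Icc_subset_Ioo hξ.1 hx.2).trans hint
  by_contra! hx_nonneg
  obtain ⟨z, hz, hz_zero⟩ := intermediate_value_Icc hξ.2.le
    (h.contDiffOn_deriv_field.continuousOn.mono hsub) ⟨hξ_neg.le, hx_nonneg⟩
  exact (hH z ⟨hξ.1.trans_le hz.1, hz.2⟩).ne'
    (h.hubble_eq_zero_of_deriv_field_eq_zero (interior_subset (hsub hz)) hz_zero)

theorem strictAntiOn_energy (h : EdGB H φ (Icc a T)) (hHa : 0 < H a) (hφa : deriv φ a < 0) :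
    StrictAntiOn (fun t => H t ^ 2 * exp (φ t)) (Icc a T) := by
  rcases lt_or_ge T a with hTa | haT
  · exact (Icc_eq_empty_of_lt hTa ▸ subsingleton_empty).strictAntiOn _
  have hHpos : ∀ x ∈ Icc a T, 0 < H x := by
    refine h.1.continuousOn.forall_pos_of_uniform_lower_bound hHa
      (c := ((H a)⁻¹ + 3 * (T - a))⁻¹) (by have := sub_nonneg.2 haT; positivity) ?_
    intro x hx hpos
    have hint : ∀ y ∈ Ioo a x, y ∈ interior (Icc a T) := fun y hy => by
      rw [interior_Icc]; exact ⟨hy.1, hy.2.trans_le hx.2⟩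
    have hφ_neg : ∀ y ∈ Ioo a x, deriv φ y < 0 := fun y hy =>
      h.deriv_field_neg hφa ⟨hy.1, hy.2.trans_le hx.2⟩ fun z hz =>
        hpos z ⟨hz.1.le, hz.2.trans hy.2.le⟩
    have hinv := inv_le_inv_add_mul_of_neg_mul_sq_le_deriv hx.1
      (h.1.continuousOn.mono (Icc_subset_Icc_right hx.2)) hpos
      (fun y hy => h.differentiableAt_hubble (hint y hy)) fun y hy =>
        h.neg_three_mul_sq_le_deriv_hubble (hint y hy) (hpos y (Ioo_subset_Icc_self hy))
          (hφ_neg y hy)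
    calc ((H a)⁻¹ + 3 * (T - a))⁻¹ ≤ ((H x)⁻¹)⁻¹ :=
          inv_anti₀ (inv_pos.2 (hpos x ⟨hx.1, le_rfl⟩)) (hinv.trans (by linarith [hx.2]))
      _ = H x := inv_inv _
  refine strictAntiOn_of_deriv_neg (convex_Icc a T)
    ((h.1.continuousOn.pow 2).mul h.2.1.continuousOn.rexp) fun x hx => ?_
  have hx' : x ∈ Ioo a T := by rwa [interior_Icc] at hx
  exact h.deriv_energy_neg hx (hHpos x (interior_subset hx))
    (h.deriv_field_neg hφa hx' fun y hy => hHpos y ⟨hy.1.le, hy.2.trans hx'.2.le⟩)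

end EdGB

theorem stmt_11_general (b : EReal) (β : ℝ) (H φ : ℝ → ℝ)
    (hsys : EdGB H φ {t : ℝ | 0 ≤ t ∧ (t : EReal) < b})
    (hdata : NegBranchData H φ β) :
    ∀ t : ℝ, 0 < t → (t : EReal) < b →
      H t ^ 2 * Real.exp (φ t) < β ^ 2 := by
  obtain ⟨hβ, -, hH0, hφ0, hφ'0⟩ := hdata
  intro t ht htb
  have hsys_t : EdGB H φ (Icc 0 t) :=
    hsys.mono fun x hx => ⟨hx.1, (EReal.coe_le_coe_iff.2 hx.2).trans_lt htb⟩
  have hφ'0_neg : deriv φ 0 < 0 := by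
    rw [hφ'0]; nlinarith [pow_pos hβ 3, sqrt_nonneg (9 * β ^ 6 + 6 * β ^ 2)]
  simpa [hH0, hφ0] using
    (hsys_t.strictAntiOn_energy (hH0 ▸ hβ) hφ'0_neg) ⟨le_rfl, ht.le⟩ ⟨ht.le, le_rfl⟩ ht

/-- If `(H, φ)` solves the EdGB FLRW system on `[0, b)` (with `b ∈ (0, +∞]`) with
the negative-branch initial data with parameter `β`, then
`H(t)²·e^{φ(t)} < β²` for all `t ∈ (0, b)`. -/
theorem stmt_11 (b : EReal) (hb : 0 < b) (β : ℝ) (H φ : ℝ → ℝ)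
    (hsys : EdGB H φ {t : ℝ | 0 ≤ t ∧ (t : EReal) < b})
    (hdata : NegBranchData H φ β) :
    ∀ t : ℝ, 0 < t → (t : EReal) < b →
      H t ^ 2 * Real.exp (φ t) < β ^ 2 :=
  stmt_11_general b β H φ hsys hdata
end

section
/- Let a < 0 and let (H, φ) solve the EdGB FLRW system on (a, 0] with H(0) = β > 0 and φ'(0) < 0. If H'(0) − 3·β^4·exp(φ(0)) + β^2 < 0, then H'(t) − 3·H(t)^4·exp(φ(t)) + H(t)^2 < 0 for all t ∈ (a, 0]. -/
/-!
Differentiating the Hamiltonian constraint, eliminating `φ''` with the scalar field equation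
and using the constraint once more gives, wherever the system holds on a neighbourhood,
`D₃ · (9e^{2φ}H⁶ + φ'²) = −3H⁴(4 + 9e^{3φ}H⁶)`,
so `D₃ < 0` wherever `H ≠ 0`. It remains to see that `H` cannot vanish on `(a, 0]`: just after
the last zero `z` of `H` before `0` we have `H > 0` and `3e^φH² < 1`, hence
`H' < H²(3e^φH² − 1) < 0`, so `H` would decrease from `H(z) = 0` to a positive value.
-/

open Set Filter Topology

lemma exists_last_zero_of_nonpos_of_pos {f : ℝ → ℝ} {x b : ℝ} (hxb : x ≤ b)
    (hf : ContinuousOn f (Icc x b)) (hx : f x ≤ 0) (hb : 0 < f b) :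
    ∃ z ∈ Ico x b, f z = 0 ∧ ∀ s ∈ Ioc z b, 0 < f s := by
  set Z := Icc x b ∩ f ⁻¹' {0}
  have hZ_nonempty : Z.Nonempty := by
    obtain ⟨z, hz, hfz⟩ := intermediate_value_Icc hxb hf ⟨hx, hb.le⟩
    exact ⟨z, hz, hfz⟩
  have hZ_compact : IsCompact Z :=
    isCompact_Icc.of_isClosed_subset
      (hf.preimage_isClosed_of_isClosed isClosed_Icc isClosed_singleton) inter_subset_left
  obtain ⟨⟨hxz, hzb⟩, hfz⟩ := hZ_compact.sSup_mem hZ_nonempty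
  have hfz : f (sSup Z) = 0 := hfz
  refine ⟨sSup Z, ⟨hxz, hzb.lt_of_ne fun h => hb.ne' (h ▸ hfz)⟩, hfz, fun s hs => ?_⟩
  by_contra! hfs
  have hsub : Icc s b ⊆ Icc x b := Icc_subset_Icc (hxz.trans hs.1.le) le_rfl
  obtain ⟨y, hy, hfy⟩ := intermediate_value_Icc hs.2 (hf.mono hsub) ⟨hfs, hb.le⟩
  have : y ≤ sSup Z := le_csSup hZ_compact.bddAbove ⟨hsub hy, hfy⟩
  linarith [hs.1, hy.1]

namespace EdGB

variable {H φ : ℝ → ℝ} {I : Set ℝ} {t : ℝ}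

lemma hasDerivAt_H (hsys : EdGB H φ I) (ht : I ∈ 𝓝 t) : HasDerivAt H (deriv H t) t :=
  ((hsys.1.contDiffAt ht).differentiableAt one_ne_zero).hasDerivAt

lemma hasDerivAt_φ (hsys : EdGB H φ I) (ht : I ∈ 𝓝 t) : HasDerivAt φ (deriv φ t) t :=
  ((hsys.2.1.contDiffAt ht).differentiableAt two_ne_zero).hasDerivAt

lemma hasDerivAt_deriv_φ (hsys : EdGB H φ I) (ht : I ∈ 𝓝 t) :
    HasDerivAt (deriv φ) (deriv (deriv φ) t) t :=
  (((hsys.2.1.contDiffAt ht).derivWithin (m := 1) le_rfl).differentiableAt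
    one_ne_zero).hasDerivAt

lemma deriv_constraint_eq_zero (hsys : EdGB H φ I) (ht : I ∈ 𝓝 t) :
    6 * H t * deriv H t
      - 3 * (Real.exp (φ t) * deriv φ t ^ 2 + Real.exp (φ t) * deriv (deriv φ) t) * H t ^ 3
      - 9 * Real.exp (φ t) * deriv φ t * H t ^ 2 * deriv H t
      - deriv φ t * deriv (deriv φ) t = 0 := by
  have hH := hsys.hasDerivAt_H ht
  have hφ' := hsys.hasDerivAt_deriv_φ ht
  have hderiv := ((hH.pow 2).const_mul 3).sub
    ((((hsys.hasDerivAt_φ ht).exp.mul hφ').mul (hH.pow 3)).const_mul 3) |>.sub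
    ((hφ'.pow 2).div_const 2)
  have hconst : (fun s => 3 * H s ^ 2 - 3 * (Real.exp (φ s) * deriv φ s * H s ^ 3)
      - deriv φ s ^ 2 / 2) =ᶠ[𝓝 t] fun _ => 0 := by
    filter_upwards [ht] with s hs
    linear_combination hsys.2.2.1 s hs
  have := hderiv.unique ((hasDerivAt_const t 0).congr_of_eventuallyEq hconst)
  simp only [Pi.mul_apply, Pi.pow_apply, Nat.cast_ofNat] at this
  linear_combination this

lemma D3_mul_eq (hsys : EdGB H φ I) (ht : I ∈ 𝓝 t) :
    (deriv H t - 3 * H t ^ 4 * Real.exp (φ t) + H t ^ 2) *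
      (9 * Real.exp (φ t) ^ 2 * H t ^ 6 + deriv φ t ^ 2) =
    -3 * H t ^ 4 * (4 + 9 * Real.exp (φ t) ^ 3 * H t ^ 6) := by
  have hmem := mem_of_mem_nhds ht
  linear_combination H t * hsys.deriv_constraint_eq_zero ht
    + H t * (3 * Real.exp (φ t) * H t ^ 3 + deriv φ t) * hsys.2.2.2 t hmem
    + (4 * H t ^ 2 - 2 * deriv H t) * hsys.2.2.1 t hmem

lemma D3_neg (hsys : EdGB H φ I) (ht : I ∈ 𝓝 t) (hH : H t ≠ 0) :
    deriv H t - 3 * H t ^ 4 * Real.exp (φ t) + H t ^ 2 < 0 := by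
  have hP : 0 ≤ 9 * Real.exp (φ t) ^ 2 * H t ^ 6 + deriv φ t ^ 2 := by positivity
  refine neg_of_mul_neg_left ?_ hP
  rw [hsys.D3_mul_eq ht]
  have : 0 < 3 * H t ^ 4 * (4 + 9 * Real.exp (φ t) ^ 3 * H t ^ 6) := by positivity
  linarith

lemma deriv_H_neg (hsys : EdGB H φ I) (ht : I ∈ 𝓝 t) (hH : H t ≠ 0)
    (hsmall : 3 * Real.exp (φ t) * H t ^ 2 < 1) : deriv H t < 0 := by
  have hH2 : 0 < H t ^ 2 := by positivity
  nlinarith [hsys.D3_neg ht hH, mul_pos hH2 (sub_pos.2 hsmall)]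

lemma H_pos_of_pos_right {a b : ℝ} (hsys : EdGB H φ (Ioc a b)) (hb : 0 < H b) :
    ∀ t ∈ Ioc a b, 0 < H t := by
  intro t₀ ht₀
  by_contra! hH₀
  obtain ⟨z, ⟨ht₀z, hzb⟩, hHz, hpos⟩ := exists_last_zero_of_nonpos_of_pos ht₀.2
    (hsys.1.continuousOn.mono fun s hs => ⟨ht₀.1.trans_le hs.1, hs.2⟩) hH₀ hb
  have haz : a < z := ht₀.1.trans_le ht₀z
  have hz : Ioc a b ∈ 𝓝 z := Ioc_mem_nhds haz hzb
  have hsmall : ∀ᶠ s in 𝓝 z, 3 * Real.exp (φ s) * H s ^ 2 < 1 := by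
    have hcont : ContinuousAt (fun s => 3 * Real.exp (φ s) * H s ^ 2) z :=
      (continuousAt_const.mul (hsys.hasDerivAt_φ hz).continuousAt.rexp).mul
        ((hsys.hasDerivAt_H hz).continuousAt.pow 2)
    exact hcont.eventually_lt continuousAt_const (by simp [hHz])
  have hright : ∀ᶠ s in 𝓝[>] z, s < b ∧ 3 * Real.exp (φ s) * H s ^ 2 < 1 :=
    nhdsWithin_le_nhds ((eventually_lt_nhds hzb).and hsmall)
  obtain ⟨u, hzu, hu⟩ := mem_nhdsGT_iff_exists_Ioo_subset.1 hright
  have hc : (z + u) / 2 ∈ Ioo z u := ⟨by linarith [hzu.out], by linarith [hzu.out]⟩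
  set c := (z + u) / 2
  have hanti : StrictAntiOn H (Icc z c) := by
    refine strictAntiOn_of_deriv_neg (convex_Icc z c)
      (hsys.1.continuousOn.mono fun s hs => ⟨haz.trans_le hs.1,
        (hs.2.trans_lt (hu hc).1).le⟩) fun s hs => ?_
    rw [interior_Icc] at hs
    obtain ⟨hsb, hs_small⟩ := hu ⟨hs.1, hs.2.trans hc.2⟩
    exact hsys.deriv_H_neg (Ioc_mem_nhds (haz.trans hs.1) hsb)
      (hpos s ⟨hs.1, hsb.le⟩).ne' hs_small
  have hHc := hanti (left_mem_Icc.2 hc.1.le) (right_mem_Icc.2 hc.1.le) hc.1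
  linarith [hpos c ⟨hc.1, (hu hc).1.le⟩]

end EdGB

theorem stmt_15_general (a β : ℝ) (H φ : ℝ → ℝ)
    (hsys : EdGB H φ (Set.Ioc a 0))
    (h0 : H 0 = β) (hβ : 0 < β)
    (hD30 : deriv H 0 - 3 * β ^ 4 * Real.exp (φ 0) + β ^ 2 < 0) :
    ∀ t ∈ Set.Ioc a 0,
      deriv H t - 3 * H t ^ 4 * Real.exp (φ t) + H t ^ 2 < 0 := by
  intro t ht
  rcases ht.2.lt_or_eq with ht0 | rfl
  · exact hsys.D3_neg (Ioc_mem_nhds ht.1 ht0) (hsys.H_pos_of_pos_right (h0 ▸ hβ) t ht).ne'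
  · rwa [h0]

/-- Sign preservation of `D₃ = H' − 3H⁴e^φ + H²` backward in time: if `(H, φ)`
solves the EdGB FLRW system on `(a, 0]` with `H(0) = β > 0`, `φ'(0) < 0` and
`D₃(0) < 0`, then `D₃(t) < 0` for all `t ∈ (a, 0]`. -/
theorem stmt_15 (a β : ℝ) (ha : a < 0) (H φ : ℝ → ℝ)
    (hsys : EdGB H φ (Set.Ioc a 0))
    (h0 : H 0 = β) (hβ : 0 < β) (hφ'0 : deriv φ 0 < 0)
    (hD30 : deriv H 0 - 3 * β ^ 4 * Real.exp (φ 0) + β ^ 2 < 0) :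
    ∀ t ∈ Set.Ioc a 0,
      deriv H t - 3 * H t ^ 4 * Real.exp (φ t) + H t ^ 2 < 0 :=
  stmt_15_general a β H φ hsys h0 hβ hD30
end
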